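/- The Galois group of the Galois closure (over Q) of the field Q(λ_0), where λ_0 = i·√((−1 + √13)/6), is isomorphic to the dihedral group of order 8. -/

import Mathlib

/-!
With `μ₀ = √((1 + √13)/6)`, the minimal polynomial of `λ₀` is `X⁴ - X²/3 - 1/3`, with roots
`±λ₀, ±μ₀`. Each step of `ℚ ⊂ ℚ(√13) ⊂ ℚ(√13, μ₀) ⊂ ℚ(√13, μ₀, λ₀)` adjoins a square root not
already present: `√13` is irrational, `μ₀ = a + b√13` would force `a² + 13b² = 2ab = 1/6`, and
`λ₀` is not real while the first three fields are. So the splitting field has degree 8, and the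
Galois group, acting faithfully on the four roots, is a Sylow 2-subgroup of `S₄`; all of these
are isomorphic to the copy of `D₄` acting on `ZMod 4`.
-/

/-- `λ₀ = i·√((−1 + √13)/6)`. -/
noncomputable def lambda0 : ℂ := Complex.I * Real.sqrt ((-1 + Real.sqrt 13) / 6)

open Function Polynomial IntermediateField Module

namespace DihedralGroup

def toPermZMod (n : ℕ) : DihedralGroup n →* Equiv.Perm (ZMod n) where
  toFun
    | r i => Equiv.subRight i
    | sr i => Equiv.subLeft i
  map_one' := Equiv.ext sub_zero
  map_mul' := by
    rintro (i | i) (j | j) <;> ext x <;>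
      simp only [r_mul_r, r_mul_sr, sr_mul_r, sr_mul_sr, Equiv.Perm.coe_mul, comp_apply,
        Equiv.subRight_apply, Equiv.subLeft_apply] <;> ring

theorem toPermZMod_injective {n : ℕ} (h2 : (2 : ZMod n) ≠ 0) : Injective (toPermZMod n) := by
  refine (injective_iff_map_eq_one _).2 ?_
  rintro (i | i) h <;> have h0 := Equiv.ext_iff.1 h 0
  · simpa [toPermZMod, ← r_zero] using h0
  · have h1 := Equiv.ext_iff.1 h 1
    simp only [toPermZMod, MonoidHom.coe_mk, OneHom.coe_mk, Equiv.subLeft_apply, sub_zero,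
      Equiv.Perm.coe_one, id_eq] at h0 h1
    subst h0
    exact absurd (by linear_combination -h1) h2

end DihedralGroup

theorem nonempty_mulEquiv_of_injective_of_card_eq_sylow {p : ℕ} [Fact p.Prime]
    {G H K : Type*} [Group G] [Group H] [Group K] [Finite G] {f : H →* G} {g : K →* G}
    (hf : Injective f) (hg : Injective g)
    (hH : Nat.card H = p ^ (Nat.card G).factorization p)
    (hK : Nat.card K = p ^ (Nat.card G).factorization p) : Nonempty (H ≃* K) :=
  let P : Sylow p G :=
    .ofCard f.range <| by rwa [← Nat.card_congr (MonoidHom.ofInjective hf).toEquiv]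
  let Q : Sylow p G :=
    .ofCard g.range <| by rwa [← Nat.card_congr (MonoidHom.ofInjective hg).toEquiv]
  ⟨(MonoidHom.ofInjective hf).trans ((P.equiv Q).trans (MonoidHom.ofInjective hg).symm)⟩

theorem nonempty_mulEquiv_dihedralGroup_four_of_injective {G α : Type*} [Group G] [Fintype α]
    (hα : Fintype.card α = 4) {f : G →* Equiv.Perm α} (hf : Injective f)
    (hG : Nat.card G = 8) : Nonempty (G ≃* DihedralGroup 4) := by
  have : Fact (Nat.Prime 2) := ⟨Nat.prime_two⟩
  have hS4 : 2 ^ (Nat.card (Equiv.Perm α)).factorization 2 = 8 := by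
    rw [Nat.card_perm, Nat.card_eq_fintype_card, hα, show Nat.factorial 4 = 2 ^ 3 * 3 from rfl,
      Nat.factorization_mul_apply_of_coprime (by norm_num),
      Nat.Prime.factorization_pow Nat.prime_two]
    simp [Nat.factorization_eq_zero_of_not_dvd]
  let e : ZMod 4 ≃ α := Fintype.equivOfCardEq (by simp [hα])
  exact nonempty_mulEquiv_of_injective_of_card_eq_sylow (p := 2) hf
    (g := e.permCongrHom.toMonoidHom.comp (DihedralGroup.toPermZMod 4))
    (e.permCongrHom.injective.comp (DihedralGroup.toPermZMod_injective (by decide)))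
    (by rw [hS4, hG]) (by rw [hS4, DihedralGroup.nat_card])

theorem Polynomial.Gal.nonempty_mulEquiv_dihedralGroup_four {F : Type*} [Field F] {p : F[X]}
    (hp : p.Separable) (hdeg : p.natDegree = 4)
    (hfinrank : finrank F p.SplittingField = 8) :
    Nonempty (p.Gal ≃* DihedralGroup 4) := by
  have : Fact ((p.map (algebraMap F p.SplittingField)).Splits) := ⟨SplittingField.splits p⟩
  refine nonempty_mulEquiv_dihedralGroup_four_of_injective ?_
    (galActionHom_injective p p.SplittingField) (hfinrank ▸ card_of_separable hp)
  rw [card_rootSet_eq_natDegree hp (SplittingField.splits p), hdeg]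

theorem Polynomial.finrank_splittingField_eq_finrank_adjoin_rootSet {F E : Type*} [Field F]
    [Field E] [Algebra F E] {p : F[X]} (hp : (p.map (algebraMap F E)).Splits) :
    finrank F p.SplittingField = finrank F (adjoin F (p.rootSet E)) :=
  have := adjoin_rootSet_isSplittingField hp
  (IsSplittingField.algEquiv (adjoin F (p.rootSet E)) p).toLinearEquiv.finrank_eq.symm

theorem exists_add_mul_eq_of_mem_adjoin_of_sq_eq {K L : Type*} [Field K] [Field L] [Algebra K L]
    {α : L} {c : K} (hα : α ^ 2 = algebraMap K L c) {β : L} (hβ : β ∈ K⟮α⟯) :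
    ∃ a b : K, algebraMap K L a + algebraMap K L b * α = β := by
  set q : K[X] := X ^ 2 - C c
  have hroot : aeval α q = 0 := by simp [q, hα]
  have hmonic : q.Monic := monic_X_pow_sub_C c two_ne_zero
  have hq : q.natDegree = 2 := natDegree_X_pow_sub_C
  rw [← mem_toSubalgebra, adjoin_simple_toSubalgebra_of_isAlgebraic ⟨q, hmonic.ne_zero, hroot⟩,
    Algebra.adjoin_singleton_eq_range_aeval] at hβ
  obtain ⟨f, rfl⟩ := hβ
  have hdeg : (f %ₘ q).natDegree < 2 :=
    hq ▸ natDegree_modByMonic_lt f hmonic fun h => by simp [h] at hq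
  obtain ⟨a, b, hab⟩ : ∃ a b, f %ₘ q = C b * X + C a :=
    ⟨_, _, eq_X_add_C_of_natDegree_le_one (Nat.le_of_lt_succ hdeg)⟩
  refine ⟨a, b, ?_⟩
  rw [AlgHom.toRingHom_eq_coe, RingHom.coe_coe, ← aeval_modByMonic_eq_self_of_root hroot, hab]
  simp only [map_add, map_mul, aeval_C, aeval_X]
  ring

theorem IntermediateField.finrank_adjoin_simple_eq_two {K L : Type*} [Field K] [Field L]
    [Algebra K L] {F : IntermediateField K L} {α : L} (hsq : α ^ 2 ∈ F) (hα : α ∉ F) :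
    finrank F F⟮α⟯ = 2 := by
  set q : F[X] := X ^ 2 - C ⟨α ^ 2, hsq⟩
  have hroot : aeval α q = 0 := by simp [q]
  have hmonic : q.Monic := monic_X_pow_sub_C _ two_ne_zero
  have hint : IsIntegral F α := ⟨q, hmonic, hroot⟩
  rw [adjoin.finrank hint]
  refine le_antisymm ?_ ((minpoly.two_le_natDegree_iff hint).2 ?_)
  · have hq : q.natDegree = 2 := natDegree_X_pow_sub_C
    exact hq ▸ natDegree_le_of_dvd (minpoly.dvd F α hroot) hmonic.ne_zero
  · rintro ⟨x, rfl⟩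
    exact hα x.2

theorem IntermediateField.finrank_adjoin_insert_of_sq_mem {K L : Type*} [Field K] [Field L]
    [Algebra K L] {S : Set L} {α : L} (hsq : α ^ 2 ∈ adjoin K S) (hα : α ∉ adjoin K S) :
    finrank K (adjoin K (insert α S)) = finrank K (adjoin K S) * 2 := by
  rw [Set.insert_eq, Set.union_comm, ← adjoin_adjoin_left, ← finrank_adjoin_simple_eq_two hsq hα]
  exact (finrank_mul_finrank K (adjoin K S) (adjoin K S)⟮α⟯).symm

theorem Complex.im_eq_zero_of_mem_adjoin {S : Set ℂ} (hS : ∀ z ∈ S, z.im = 0) {z : ℂ}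
    (hz : z ∈ adjoin ℚ S) : z.im = 0 := by
  have hle : adjoin ℚ S ≤ (ofRealAm.restrictScalars ℚ).fieldRange :=
    adjoin_le_iff.2 fun w hw => ⟨w.re, Complex.ext rfl (hS w hw).symm⟩
  obtain ⟨x, rfl⟩ := hle hz
  exact ofReal_im x

noncomputable def sqrt13 : ℂ := (√13 : ℝ)

noncomputable def mu0 : ℂ := (√((1 + √13) / 6) : ℝ)

noncomputable def lambda0Quartic : ℚ[X] := X ^ 4 - C (1 / 3) * X ^ 2 - C (1 / 3)

theorem irrational_sqrt_thirteen : Irrational √13 :=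
  Nat.Prime.irrational_sqrt (by norm_num)

theorem one_lt_sqrt_thirteen : 1 < √13 :=
  Real.lt_sqrt_of_sq_lt (by norm_num)

theorem sqrt13_sq : sqrt13 ^ 2 = 13 := by
  rw [sqrt13, ← Complex.ofReal_pow, Real.sq_sqrt (by norm_num)]
  norm_num

theorem lambda0_sq : lambda0 ^ 2 = (1 - sqrt13) / 6 := by
  rw [lambda0, sqrt13, mul_pow, Complex.I_sq, ← Complex.ofReal_pow,
    Real.sq_sqrt (by linarith [one_lt_sqrt_thirteen])]
  push_cast
  ring

theorem mu0_sq : mu0 ^ 2 = (1 + sqrt13) / 6 := by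
  rw [mu0, sqrt13, ← Complex.ofReal_pow, Real.sq_sqrt (by positivity)]
  push_cast
  ring

theorem lambda0_im_ne_zero : lambda0.im ≠ 0 := by
  have : 0 < √((-1 + √13) / 6) := Real.sqrt_pos.2 (by linarith [one_lt_sqrt_thirteen])
  simpa [lambda0] using this.ne'

theorem lambda0_sq_mem {F : IntermediateField ℚ ℂ} (h : sqrt13 ∈ F) : lambda0 ^ 2 ∈ F :=
  lambda0_sq ▸ div_mem (sub_mem (one_mem F) h) (ofNat_mem F 6)

theorem mu0_sq_mem {F : IntermediateField ℚ ℂ} (h : sqrt13 ∈ F) : mu0 ^ 2 ∈ F :=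
  mu0_sq ▸ div_mem (add_mem (one_mem F) h) (ofNat_mem F 6)

theorem sqrt13_not_mem_bot : sqrt13 ∉ (⊥ : IntermediateField ℚ ℂ) := by
  rintro ⟨q, hq⟩
  refine irrational_sqrt_thirteen.ne_rat q (Complex.ofReal_injective ?_)
  simpa [sqrt13] using hq.symm

theorem mu0_not_mem_adjoin_sqrt13 : mu0 ∉ ℚ⟮sqrt13⟯ := by
  intro h
  obtain ⟨a, b, hab⟩ :=
    exists_add_mul_eq_of_mem_adjoin_of_sq_eq (c := 13) (by simp [sqrt13_sq]) h
  have hreal : (a + b * √13 : ℝ) = √((1 + √13) / 6) := by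
    apply Complex.ofReal_injective
    rw [← mu0, ← hab]
    simp [sqrt13]
  have hsq : (a + b * √13 : ℝ) ^ 2 = (1 + √13) / 6 := by
    rw [hreal, Real.sq_sqrt (by positivity)]
  have h13 : √13 ^ 2 = 13 := Real.sq_sqrt (by norm_num)
  have hcoeff :
      ((a ^ 2 + 13 * b ^ 2 - 1 / 6 : ℚ) : ℝ) + ((2 * a * b - 1 / 6 : ℚ) : ℝ) * √13 = 0 := by
    push_cast
    linear_combination hsq - b ^ 2 * h13
  have hab2 : 2 * a * b - 1 / 6 = 0 := by
    by_contra hne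
    exact ((irrational_sqrt_thirteen.ratCast_mul hne).ratCast_add _).ne_zero hcoeff
  rw [hab2, Rat.cast_zero, zero_mul, add_zero, Rat.cast_eq_zero] at hcoeff
  nlinarith [sq_nonneg (a - b), sq_nonneg b]

theorem lambda0_not_mem_adjoin {S : Set ℂ} (hS : ∀ z ∈ S, z.im = 0) : lambda0 ∉ adjoin ℚ S :=
  fun h => lambda0_im_ne_zero (Complex.im_eq_zero_of_mem_adjoin hS h)

theorem finrank_adjoin_sqrt13 : finrank ℚ ℚ⟮sqrt13⟯ = 2 := by
  have h := finrank_adjoin_insert_of_sq_mem (K := ℚ) (S := ∅) (α := sqrt13)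
    (by rw [adjoin_empty, sqrt13_sq]; exact ofNat_mem _ 13)
    (by rw [adjoin_empty]; exact sqrt13_not_mem_bot)
  rwa [adjoin_empty, IntermediateField.finrank_bot, one_mul, insert_empty_eq] at h

theorem finrank_adjoin_lambda0_sqrt13 : finrank ℚ (adjoin ℚ {lambda0, sqrt13}) = 4 := by
  rw [finrank_adjoin_insert_of_sq_mem (lambda0_sq_mem (mem_adjoin_simple_self ℚ sqrt13))
    (lambda0_not_mem_adjoin (by simp [sqrt13])), finrank_adjoin_sqrt13]

theorem finrank_adjoin_mu0_sqrt13 : finrank ℚ (adjoin ℚ {mu0, sqrt13}) = 4 := by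
  rw [finrank_adjoin_insert_of_sq_mem (mu0_sq_mem (mem_adjoin_simple_self ℚ sqrt13))
    mu0_not_mem_adjoin_sqrt13, finrank_adjoin_sqrt13]

theorem finrank_adjoin_lambda0_mu0_sqrt13 : finrank ℚ (adjoin ℚ {lambda0, mu0, sqrt13}) = 8 := by
  rw [finrank_adjoin_insert_of_sq_mem (lambda0_sq_mem (subset_adjoin ℚ _ (by simp)))
    (lambda0_not_mem_adjoin (by simp [sqrt13, mu0])), finrank_adjoin_mu0_sqrt13]

theorem adjoin_lambda0_eq_adjoin_lambda0_sqrt13 : ℚ⟮lambda0⟯ = adjoin ℚ {lambda0, sqrt13} := by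
  refine le_antisymm (adjoin.mono _ _ _ (by simp)) (adjoin_le_iff.2 ?_)
  have hl : lambda0 ∈ ℚ⟮lambda0⟯ := mem_adjoin_simple_self ℚ lambda0
  have hs : sqrt13 = 1 - 6 * lambda0 ^ 2 := by linear_combination 6 * lambda0_sq
  refine Set.insert_subset_iff.2 ⟨hl, Set.singleton_subset_iff.2 ?_⟩
  rw [SetLike.mem_coe, hs]
  exact sub_mem (one_mem _) (mul_mem (ofNat_mem _ 6) (pow_mem hl 2))

theorem aeval_lambda0Quartic (x : ℂ) :
    aeval x lambda0Quartic = (x ^ 2 - lambda0 ^ 2) * (x ^ 2 - mu0 ^ 2) := by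
  simp only [lambda0Quartic, map_sub, map_mul, map_pow, aeval_X, aeval_C, eq_ratCast]
  push_cast
  linear_combination (x ^ 2 - mu0 ^ 2) * lambda0_sq + (x ^ 2 - (1 - sqrt13) / 6) * mu0_sq +
    sqrt13_sq / 36

theorem aeval_lambda0Quartic_eq_zero_iff {x : ℂ} :
    aeval x lambda0Quartic = 0 ↔ x = lambda0 ∨ x = -lambda0 ∨ x = mu0 ∨ x = -mu0 := by
  rw [aeval_lambda0Quartic, mul_eq_zero, sub_eq_zero, sub_eq_zero, sq_eq_sq_iff_eq_or_eq_neg,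
    sq_eq_sq_iff_eq_or_eq_neg, or_assoc]

theorem lambda0Quartic_monic : lambda0Quartic.Monic := by
  unfold lambda0Quartic
  monicity!

theorem natDegree_lambda0Quartic : lambda0Quartic.natDegree = 4 := by
  unfold lambda0Quartic
  compute_degree!

theorem isIntegral_lambda0 : IsIntegral ℚ lambda0 :=
  ⟨lambda0Quartic, lambda0Quartic_monic, by
    rw [← aeval_def]; exact aeval_lambda0Quartic_eq_zero_iff.2 (Or.inl rfl)⟩

theorem minpoly_lambda0 : minpoly ℚ lambda0 = lambda0Quartic := by
  refine (eq_of_monic_of_dvd_of_natDegree_le (minpoly.monic isIntegral_lambda0)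
    lambda0Quartic_monic (minpoly.dvd _ _ ?_) ?_).symm
  · exact aeval_lambda0Quartic_eq_zero_iff.2 (Or.inl rfl)
  · rw [natDegree_lambda0Quartic, ← adjoin.finrank isIntegral_lambda0,
      adjoin_lambda0_eq_adjoin_lambda0_sqrt13, finrank_adjoin_lambda0_sqrt13]

theorem lambda0Quartic_separable : lambda0Quartic.Separable :=
  minpoly_lambda0 ▸ (minpoly.irreducible isIntegral_lambda0).separable

theorem adjoin_rootSet_lambda0Quartic :
    adjoin ℚ (lambda0Quartic.rootSet ℂ) = adjoin ℚ {lambda0, mu0, sqrt13} := by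
  have hroot {x : ℂ} :
      x ∈ lambda0Quartic.rootSet ℂ ↔ x = lambda0 ∨ x = -lambda0 ∨ x = mu0 ∨ x = -mu0 := by
    rw [mem_rootSet, and_iff_right lambda0Quartic_monic.ne_zero, aeval_lambda0Quartic_eq_zero_iff]
  refine le_antisymm (adjoin_le_iff.2 fun x hx => ?_) (adjoin_le_iff.2 ?_)
  · have hl : lambda0 ∈ adjoin ℚ {lambda0, mu0, sqrt13} := subset_adjoin ℚ _ (by simp)
    have hm : mu0 ∈ adjoin ℚ {lambda0, mu0, sqrt13} := subset_adjoin ℚ _ (by simp)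
    rcases hroot.1 hx with rfl | rfl | rfl | rfl
    exacts [hl, neg_mem hl, hm, neg_mem hm]
  · have hl : lambda0 ∈ adjoin ℚ (lambda0Quartic.rootSet ℂ) :=
      subset_adjoin ℚ _ (hroot.2 (by simp))
    have hm : mu0 ∈ adjoin ℚ (lambda0Quartic.rootSet ℂ) := subset_adjoin ℚ _ (hroot.2 (by simp))
    have hs : sqrt13 = 6 * mu0 ^ 2 - 1 := by linear_combination -6 * mu0_sq
    refine Set.insert_subset_iff.2
      ⟨hl, Set.insert_subset_iff.2 ⟨hm, Set.singleton_subset_iff.2 ?_⟩⟩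
    rw [SetLike.mem_coe, hs]
    exact sub_mem (mul_mem (ofNat_mem _ 6) (pow_mem hm 2)) (one_mem _)

theorem finrank_splittingField_lambda0Quartic : finrank ℚ lambda0Quartic.SplittingField = 8 := by
  rw [finrank_splittingField_eq_finrank_adjoin_rootSet
      (IsAlgClosed.splits (lambda0Quartic.map (algebraMap ℚ ℂ))),
    adjoin_rootSet_lambda0Quartic, finrank_adjoin_lambda0_mu0_sqrt13]

/-- The Galois group of the Galois closure of `ℚ(λ₀)` over `ℚ` (that is, of the
splitting field of the minimal polynomial of `λ₀`) is the dihedral group of order 8. -/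
theorem galois_group_of_lambda0_closure_is_dihedral :
    Nonempty (((minpoly ℚ lambda0).SplittingField ≃ₐ[ℚ] (minpoly ℚ lambda0).SplittingField)
      ≃* DihedralGroup 4) := by
  rw [minpoly_lambda0]
  exact Gal.nonempty_mulEquiv_dihedralGroup_four lambda0Quartic_separable
    natDegree_lambda0Quartic finrank_splittingField_lambda0Quartic
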